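/- arXiv:2603.27363 — 3 statements merged into one kernel-verified Lean document; each statement's English description precedes it below -/
import Mathlib

section
/- For all real numbers a > 0, b > 0 and θ with 0 < θ ≤ π/2, the sum of the logarithmic partial derivatives of T(·,·,θ) at (a, b) is positive: a · deriv (fun x ↦ T(x, b, θ)) a + b · deriv (fun x ↦ T(a, x, θ)) b > 0. (This is property (c) of the monotonicity lemma: ∂T_{i,e}/∂u_i + ∂T_{i,e}/∂u_j > 0, i.e. the dependence on a circle's own curvature dominates the dependence on its neighbor's.) -/
open Real Filter

/-- Total geodesic curvature of the arc of the first circle bounding the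
intersection bigon of two spherical disks with boundary geodesic curvatures
`a`, `b` intersecting at interior angle `θ`. -/
noncomputable def T (a b θ : ℝ) : ℝ :=
  (2 * a / Real.sqrt (a ^ 2 + 1)) *
    Real.arctan (Real.sin θ * Real.sqrt (a ^ 2 + 1) / (b + a * Real.cos θ))

/-- For positive `x`, `x / (1 + x²) < arctan x`. -/
lemma arctan_key (x : ℝ) (hx : 0 < x) : x / (1 + x ^ 2) < Real.arctan x := by
  set f : ℝ → ℝ := fun y => Real.arctan y - y / (1 + y ^ 2) with hf
  have hden : ∀ y : ℝ, (1 : ℝ) + y ^ 2 ≠ 0 := fun y => by positivity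
  have hd : ∀ y : ℝ, HasDerivAt f
      (1 / (1 + y ^ 2) - (1 * (1 + y ^ 2) - y * (2 * y)) / (1 + y ^ 2) ^ 2) y := by
    intro y
    have h1 : HasDerivAt (fun y : ℝ => 1 + y ^ 2) (2 * y) y := by
      simpa using ((hasDerivAt_pow 2 y).const_add 1)
    have h2 : HasDerivAt (fun y : ℝ => y / (1 + y ^ 2))
        ((1 * (1 + y ^ 2) - y * (2 * y)) / (1 + y ^ 2) ^ 2) y :=
      (hasDerivAt_id y).div h1 (hden y)
    exact (Real.hasDerivAt_arctan y).sub h2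
  have hmono : StrictMonoOn f (Set.Ici 0) := by
    apply strictMonoOn_of_deriv_pos (convex_Ici 0)
    · exact fun y _ => (hd y).continuousAt.continuousWithinAt
    · intro y hy
      rw [interior_Ici] at hy
      rw [(hd y).deriv]
      rw [div_sub_div _ _ (hden y) (by positivity)]
      apply div_pos
      · nlinarith [hy.out, sq_nonneg y]
      · positivity
  have h0 : f 0 = 0 := by simp [hf]
  have hlt := hmono (Set.self_mem_Ici) (Set.mem_Ici.mpr hx.le) hx
  rw [h0] at hlt
  simp only [hf] at hlt
  linarith

theorem stmt_4 (a b θ : ℝ) (ha : 0 < a) (hb : 0 < b)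
    (hθ₁ : 0 < θ) (hθ₂ : θ ≤ Real.pi / 2) :
    0 < a * deriv (fun x => T x b θ) a + b * deriv (fun x => T a x θ) b := by
  set s := Real.sin θ with hs
  set c := Real.cos θ with hc
  have hspos : 0 < s := Real.sin_pos_of_pos_of_lt_pi hθ₁ (by linarith [Real.pi_pos])
  have hcnn : 0 ≤ c := Real.cos_nonneg_of_mem_Icc ⟨by linarith [Real.pi_pos], hθ₂⟩
  set S := Real.sqrt (a ^ 2 + 1) with hSdef
  have hSpos : 0 < S := Real.sqrt_pos.mpr (by positivity)
  have hS : S ^ 2 = a ^ 2 + 1 := Real.sq_sqrt (by positivity)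
  have hbac : 0 < b + a * c := by positivity
  set D := (b + a * c) ^ 2 + s ^ 2 * S ^ 2 with hD
  have hDpos : 0 < D := by positivity
  set X := s * S / (b + a * c) with hX
  have hXpos : 0 < X := by rw [hX]; positivity
  -- derivative in the second argument
  have hdb : HasDerivAt (fun x => T a x θ)
      ((2 * a / S) * ((1 / (1 + X ^ 2)) *
        ((0 * (b + a * c) - (s * S) * 1) / (b + a * c) ^ 2))) b := by
    have hu : HasDerivAt (fun x : ℝ => s * S / (x + a * c))
        ((0 * (b + a * c) - (s * S) * 1) / (b + a * c) ^ 2) b :=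
      (hasDerivAt_const b (s * S)).div ((hasDerivAt_id b).add_const (a * c)) hbac.ne'
    have harc := (Real.hasDerivAt_arctan (s * S / (b + a * c))).comp b hu
    exact harc.const_mul (2 * a / S)
  -- derivative in the first argument
  have hsq : HasDerivAt (fun x : ℝ => Real.sqrt (x ^ 2 + 1)) (2 * a / (2 * S)) a := by
    have h1 : HasDerivAt (fun x : ℝ => x ^ 2 + 1) (2 * a) a := by
      simpa using ((hasDerivAt_pow 2 a).add_const 1)
    exact h1.sqrt (by positivity)
  have hda : HasDerivAt (fun x => T x b θ)
      (((2 * S - 2 * a * (2 * a / (2 * S))) / S ^ 2) * Real.arctan X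
        + (2 * a / S) * ((1 / (1 + X ^ 2)) *
          ((s * (2 * a / (2 * S)) * (b + a * c) - s * S * c) / (b + a * c) ^ 2))) a := by
    have hf : HasDerivAt (fun x : ℝ => 2 * x / Real.sqrt (x ^ 2 + 1))
        ((2 * S - 2 * a * (2 * a / (2 * S))) / S ^ 2) a := by
      have h2x : HasDerivAt (fun x : ℝ => 2 * x) 2 a := by
        simpa using (hasDerivAt_id a).const_mul 2
      exact h2x.div hsq hSpos.ne'
    have hu : HasDerivAt (fun x : ℝ => s * Real.sqrt (x ^ 2 + 1) / (b + x * c))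
        ((s * (2 * a / (2 * S)) * (b + a * c) - s * S * c) / (b + a * c) ^ 2) a := by
      have hnum : HasDerivAt (fun x : ℝ => s * Real.sqrt (x ^ 2 + 1)) (s * (2 * a / (2 * S))) a :=
        hsq.const_mul s
      have hden : HasDerivAt (fun x : ℝ => b + x * c) c a := by
        simpa using ((hasDerivAt_id a).mul_const c).const_add b
      exact hnum.div hden hbac.ne'
    have harc := (Real.hasDerivAt_arctan (s * S / (b + a * c))).comp a hu
    exact hf.mul harc
  rw [hda.deriv, hdb.deriv]
  -- algebraic simplification of the derivatives
  have h1 : (1:ℝ) + X ^ 2 = D / (b + a * c) ^ 2 := by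
    rw [hX, hD]; field_simp
  have hvb : (2 * a / S) * ((1 / (1 + X ^ 2)) *
      ((0 * (b + a * c) - (s * S) * 1) / (b + a * c) ^ 2)) = -(2 * a * s) / D := by
    rw [h1, hD]; field_simp; ring
  have hA1 : (2 * S - 2 * a * (2 * a / (2 * S))) / S ^ 2 = 2 / S ^ 3 := by
    field_simp
    linear_combination hS
  have hA2 : (2 * a / S) * ((1 / (1 + X ^ 2)) *
      ((s * (2 * a / (2 * S)) * (b + a * c) - s * S * c) / (b + a * c) ^ 2))
      = 2 * a * s * (a * b - c) / (S ^ 2 * D) := by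
    rw [h1, hD]; field_simp
    linear_combination (-c) * hS
  rw [hvb, hA1, hA2]
  have heq : a * (2 / S ^ 3 * Real.arctan X + 2 * a * s * (a * b - c) / (S ^ 2 * D))
      + b * (-(2 * a * s) / D)
      = 2 * a / S ^ 3 * Real.arctan X - 2 * a * s * (b + a * c) / (S ^ 2 * D) := by
    rw [hD]; field_simp
    linear_combination (-S * s * b) * hS
  rw [heq]
  -- the key inequality
  have hkey := arctan_key X hXpos
  have hXval : X / (1 + X ^ 2) = s * S * (b + a * c) / D := by
    rw [hX, hD]; field_simp
  rw [hXval] at hkey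
  have heq2 : 2 * a / S ^ 3 * (s * S * (b + a * c) / D)
      = 2 * a * s * (b + a * c) / (S ^ 2 * D) := by
    rw [hD]; field_simp
  have hlt : 2 * a * s * (b + a * c) / (S ^ 2 * D) < 2 * a / S ^ 3 * Real.arctan X := by
    rw [← heq2]
    exact mul_lt_mul_of_pos_left hkey (by positivity)
  linarith
end

section
/- For all real numbers b > 0 and θ with 0 < θ ≤ π/2, the function a ↦ T(a, b, θ) + T(b, a, θ) is strictly increasing on (0, ∞). Equivalently (via the Gauss–Bonnet formula Area(Ω) = 2θ − T(a,b,θ) − T(b,a,θ) for the intersection bigon Ω), the area of the bigon is strictly decreasing in each of the two geodesic curvatures. (This is property (d) of the monotonicity lemma.) -/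
open Real Filter

lemma arctan_gt_div (u : ℝ) (hu : 0 < u) : u / (1 + u ^ 2) < Real.arctan u := by
  have ht : 0 < Real.arctan u := by
    rw [← Real.arctan_zero]; exact Real.arctan_strictMono hu
  have hs := Real.sin_lt (show (0:ℝ) < 2 * Real.arctan u by linarith)
  rw [Real.sin_two_mul, Real.sin_arctan, Real.cos_arctan] at hs
  have h2 : Real.sqrt (1 + u ^ 2) * Real.sqrt (1 + u ^ 2) = 1 + u ^ 2 :=
    Real.mul_self_sqrt (by positivity)
  have hne : Real.sqrt (1 + u ^ 2) ≠ 0 := by positivity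
  have h3 : 2 * (u / Real.sqrt (1 + u ^ 2)) * (1 / Real.sqrt (1 + u ^ 2))
      = 2 * (u / (1 + u ^ 2)) := by
    field_simp
    rw [Real.sq_sqrt (by positivity)]
  rw [h3] at hs
  linarith

theorem stmt_5 (b θ : ℝ) (hb : 0 < b) (hθ₁ : 0 < θ) (hθ₂ : θ ≤ Real.pi / 2) :
    StrictMonoOn (fun a => T a b θ + T b a θ) (Set.Ioi (0 : ℝ)) := by
  have main : ∀ a : ℝ, 0 < a →
      ∃ d, HasDerivAt (fun x => T x b θ + T b x θ) d a ∧ 0 < d := by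
    intro a ha
    simp only [T]
    have hs : 0 < Real.sin θ :=
      Real.sin_pos_of_pos_of_lt_pi hθ₁ (lt_of_le_of_lt hθ₂ (by linarith [Real.pi_pos]))
    have hc : 0 ≤ Real.cos θ := Real.cos_nonneg_of_mem_Icc ⟨by linarith [Real.pi_pos], hθ₂⟩
    have hsc : Real.sin θ ^ 2 + Real.cos θ ^ 2 = 1 := Real.sin_sq_add_cos_sq θ
    set s := Real.sin θ with hs_def
    set c := Real.cos θ with hc_def
    have hA0 : (0:ℝ) < Real.sqrt (a ^ 2 + 1) := Real.sqrt_pos.2 (by positivity)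
    have hA2 : Real.sqrt (a ^ 2 + 1) ^ 2 = a ^ 2 + 1 := Real.sq_sqrt (by positivity)
    have hB0 : (0:ℝ) < Real.sqrt (b ^ 2 + 1) := Real.sqrt_pos.2 (by positivity)
    have hB2 : Real.sqrt (b ^ 2 + 1) ^ 2 = b ^ 2 + 1 := Real.sq_sqrt (by positivity)
    set A := Real.sqrt (a ^ 2 + 1) with hA_def
    set B := Real.sqrt (b ^ 2 + 1) with hB_def
    have hp : (0:ℝ) < b + a * c := by positivity
    have hq : (0:ℝ) < a + b * c := by positivity
    set D := (b + a * c) ^ 2 + s ^ 2 * (a ^ 2 + 1) with hD_def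
    have hD : 0 < D := by rw [hD_def]; positivity
    -- derivative of sqrt(x^2+1)
    have hAd : HasDerivAt (fun x : ℝ => Real.sqrt (x ^ 2 + 1)) (a / A) a := by
      have h1 : HasDerivAt (fun x : ℝ => x ^ 2 + 1) (2 * a) a := by
        simpa using (hasDerivAt_pow 2 a).add_const 1
      have h2 := (Real.hasDerivAt_sqrt (show a ^ 2 + 1 ≠ 0 by positivity)).comp a h1
      refine h2.congr_deriv (Eq.symm ?_)
      rw [← hA_def]
      field_simp
    -- derivative of 2x/sqrt(x^2+1)
    have hg : HasDerivAt (fun x : ℝ => 2 * x / Real.sqrt (x ^ 2 + 1)) (2 / A ^ 3) a := by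
      have h1 := ((hasDerivAt_id a).const_mul 2).div hAd (ne_of_gt hA0)
      refine h1.congr_deriv (Eq.symm ?_)
      rw [← hA_def]
      field_simp
      simp only [id]
      linear_combination (-1) * hA2
    -- derivative of the first arctan argument
    have hu : HasDerivAt (fun x : ℝ => s * Real.sqrt (x ^ 2 + 1) / (b + x * c))
        (s * (a * b - c) / (A * (b + a * c) ^ 2)) a := by
      have hden : HasDerivAt (fun x : ℝ => b + x * c) c a := by
        simpa using ((hasDerivAt_id a).mul_const c).const_add b
      have h1 := (hAd.const_mul s).div hden (ne_of_gt hp)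
      refine h1.congr_deriv (Eq.symm ?_)
      rw [← hA_def]
      field_simp
      linear_combination c * hA2
    have hXsq : 1 + (s * A / (b + a * c)) ^ 2 = D / (b + a * c) ^ 2 := by
      rw [hD_def]
      field_simp
      linear_combination s ^ 2 * hA2
    -- first summand
    have hT1 : HasDerivAt (fun x : ℝ =>
        (2 * x / Real.sqrt (x ^ 2 + 1)) *
          Real.arctan (s * Real.sqrt (x ^ 2 + 1) / (b + x * c)))
        (2 / A ^ 3 * Real.arctan (s * A / (b + a * c))
          + (2 * a / A) * (s * (a * b - c) / (A * D))) a := by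
      have h1 := hg.mul hu.arctan
      refine h1.congr_deriv (Eq.symm ?_)
      rw [← hA_def, hXsq]
      have h2 : (b + a * c) ^ 2 ≠ 0 := by positivity
      field_simp
    -- second summand
    have hT2 : HasDerivAt (fun x : ℝ =>
        (2 * b / B) * Real.arctan (s * B / (x + b * c))) (-(2 * b * s / D)) a := by
      have hden : HasDerivAt (fun x : ℝ => x + b * c) 1 a := (hasDerivAt_id a).add_const (b * c)
      have hinner : HasDerivAt (fun x : ℝ => s * B / (x + b * c))
          (-(s * B) / (a + b * c) ^ 2) a := by
        have h1 := (hasDerivAt_const a (s * B)).div hden (ne_of_gt hq)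
        refine h1.congr_deriv (Eq.symm ?_)
        ring
      have hYsq : 1 + (s * B / (a + b * c)) ^ 2 = D / (a + b * c) ^ 2 := by
        rw [hD_def]
        field_simp
        linear_combination s ^ 2 * hB2 + (b ^ 2 - a ^ 2) * hsc
      have h2 := hinner.arctan.const_mul (2 * b / B)
      refine h2.congr_deriv (Eq.symm ?_)
      rw [hYsq]
      field_simp
    refine ⟨_, hT1.add hT2, ?_⟩
    -- positivity of the derivative
    have hX : 0 < s * A / (b + a * c) := by positivity
    have hkey := arctan_gt_div _ hX
    have hval : (s * A / (b + a * c)) / (1 + (s * A / (b + a * c)) ^ 2)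
        = s * A * (b + a * c) / D := by
      rw [hXsq]
      field_simp
    rw [hval] at hkey
    have hzero : 2 / A ^ 3 * (s * A * (b + a * c) / D)
        + (2 * a / A) * (s * (a * b - c) / (A * D)) - 2 * b * s / D = 0 := by
      have hDne : D ≠ 0 := ne_of_gt hD
      have hAne : A ≠ 0 := ne_of_gt hA0
      have e : 2 / A ^ 3 * (s * A * (b + a * c) / D)
          + (2 * a / A) * (s * (a * b - c) / (A * D)) - 2 * b * s / D
          = 2 * s * ((b + a * c) + a * (a * b - c) - b * A ^ 2) / (A ^ 2 * D) := by
        field_simp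
      rw [e, hA2]
      have h0 : (b + a * c) + a * (a * b - c) - b * (a ^ 2 + 1) = 0 := by ring
      rw [h0]
      simp
    have h4 : (0:ℝ) < 2 / A ^ 3 := by positivity
    have h5 := mul_lt_mul_of_pos_left hkey h4
    linarith
  apply strictMonoOn_of_deriv_pos (convex_Ioi 0)
  · intro x hx
    obtain ⟨d, hd, _⟩ := main x hx
    exact hd.continuousAt.continuousWithinAt
  · intro x hx
    rw [interior_Ioi] at hx
    obtain ⟨d, hd, hpos⟩ := main x hx
    rw [hd.deriv]
    exact hpos
end

section
/- With the weighted-graph setup below, for every k : F → ℝ with k f > 0 for all f, the total geodesic curvature vector Ttot k lies in 𝒯: Ttot k f > 0 for every f, and for every nonempty subset F' ⊆ F one has Σ_{f ∈ F'} Ttot k f < Σ_{e ∈ E(F')} 2·θ e. (This is the direction (ii) ⇒ (i): every ideal spherical circle pattern has its total geodesic curvature vector in 𝒯.) -/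
open Real Filter Finset

/-- Total geodesic curvature of the boundary circle of the disk of the face `f`,
for the weighted graph with edge-to-faces map `ε`, weights `θ`, and geodesic
curvature vector `k`. -/
noncomputable def Ttot {F E : Type*} [Fintype E] [DecidableEq F]
    (ε : E → F × F) (θ : E → ℝ) (k : F → ℝ) (f : F) : ℝ :=
  ∑ e : E,
    ((if (ε e).1 = f then T (k f) (k (ε e).2) (θ e) else 0) +
     (if (ε e).2 = f then T (k f) (k (ε e).1) (θ e) else 0))


lemma self_div_lt_arctan {x : ℝ} (hx : 0 < x) : x / (1 + x ^ 2) < Real.arctan x := by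
  have key : StrictMonoOn (fun x : ℝ => Real.arctan x - x / (1 + x ^ 2)) (Set.Ici 0) := by
    apply strictMonoOn_of_deriv_pos (convex_Ici 0)
    · exact (Real.continuous_arctan.sub (continuous_id.div
        (by continuity) (fun x => by positivity))).continuousOn
    · intro y hy
      rw [interior_Ici] at hy
      have h1 : (0:ℝ) < 1 + y ^ 2 := by positivity
      have hq : HasDerivAt (fun x : ℝ => 1 + x ^ 2) (2 * y) y := by
        simpa using ((hasDerivAt_pow 2 y).const_add 1)
      have hd : HasDerivAt (fun x : ℝ => Real.arctan x - x / (1 + x ^ 2))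
          (1 / (1 + y ^ 2) - ((1 * (1 + y ^ 2) - y * (2 * y)) / (1 + y ^ 2) ^ 2)) y :=
        (Real.hasDerivAt_arctan y).sub ((hasDerivAt_id y).div hq h1.ne')
      rw [hd.deriv]
      have : 1 / (1 + y ^ 2) - (1 * (1 + y ^ 2) - y * (2 * y)) / (1 + y ^ 2) ^ 2
          = y ^ 2 * 2 / (1 + y ^ 2) ^ 2 := by field_simp; ring
      rw [this]
      have : (0:ℝ) < y := hy
      positivity
  have := key (Set.self_mem_Ici) (Set.mem_Ici.mpr hx.le) hx
  simpa using this

lemma mul_arctan_lt {x y : ℝ} (hx : 0 < x) (hxy : x < y) :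
    x * Real.arctan y < y * Real.arctan x := by
  have hy : 0 < y := hx.trans hxy
  have key : StrictAntiOn (fun x : ℝ => Real.arctan x / x) (Set.Ioi 0) := by
    apply strictAntiOn_of_deriv_neg (convex_Ioi 0)
    · apply ContinuousOn.div Real.continuous_arctan.continuousOn continuousOn_id
      intro z hz; exact (ne_of_gt hz)
    · intro z hz
      rw [interior_Ioi] at hz
      have hz0 : (0:ℝ) < z := hz
      have hd : HasDerivAt (fun x : ℝ => Real.arctan x / x)
          ((1 / (1 + z ^ 2) * z - Real.arctan z * 1) / z ^ 2) z :=
        (Real.hasDerivAt_arctan z).div (hasDerivAt_id z) hz0.ne'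
      rw [hd.deriv]
      apply div_neg_of_neg_of_pos _ (by positivity)
      have := self_div_lt_arctan hz0
      have h1 : 1 / (1 + z ^ 2) * z = z / (1 + z ^ 2) := by ring
      rw [h1]
      linarith
  have := key (Set.mem_Ioi.mpr hx) (Set.mem_Ioi.mpr hy) hxy
  simp only at this
  rw [div_lt_div_iff₀ hy hx] at this
  linarith

lemma T_pos {a b θ : ℝ} (ha : 0 < a) (hb : 0 < b) (hθ1 : 0 < θ) (hθ2 : θ ≤ Real.pi / 2) :
    0 < T a b θ := by
  have hs : 0 < Real.sqrt (a ^ 2 + 1) := Real.sqrt_pos.mpr (by positivity)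
  have hsin : 0 < Real.sin θ := Real.sin_pos_of_pos_of_lt_pi hθ1
    (lt_of_le_of_lt hθ2 (by linarith [Real.pi_pos]))
  have hcos : 0 ≤ Real.cos θ := Real.cos_nonneg_of_mem_Icc ⟨by linarith, hθ2⟩
  have hden : 0 < b + a * Real.cos θ := by positivity
  have : 0 < Real.arctan (Real.sin θ * Real.sqrt (a ^ 2 + 1) / (b + a * Real.cos θ)) := by
    have := Real.arctan_strictMono (show (0:ℝ) < Real.sin θ * Real.sqrt (a ^ 2 + 1) / (b + a * Real.cos θ) by positivity)
    simpa using this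
  unfold T
  positivity

lemma T_lt_aux {a b θ : ℝ} (ha : 0 < a) (hb : 0 < b) (hθ1 : 0 < θ) (hθ2 : θ ≤ Real.pi / 2) :
    T a b θ < 2 * Real.arctan (a * Real.sin θ / (b + a * Real.cos θ)) := by
  have hs1 : 0 < a ^ 2 + 1 := by positivity
  have hs : 0 < Real.sqrt (a ^ 2 + 1) := Real.sqrt_pos.mpr hs1
  have has : a < Real.sqrt (a ^ 2 + 1) := by
    nlinarith [Real.sq_sqrt hs1.le, Real.sqrt_pos.mpr hs1]
  have hsin : 0 < Real.sin θ := Real.sin_pos_of_pos_of_lt_pi hθ1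
    (lt_of_le_of_lt hθ2 (by linarith [Real.pi_pos]))
  have hcos : 0 ≤ Real.cos θ := Real.cos_nonneg_of_mem_Icc ⟨by linarith, hθ2⟩
  have hden : 0 < b + a * Real.cos θ := by positivity
  set w : ℝ := Real.sin θ / (b + a * Real.cos θ) with hw
  have hw0 : 0 < w := by positivity
  have key : a * Real.arctan (Real.sqrt (a ^ 2 + 1) * w) <
      Real.sqrt (a ^ 2 + 1) * Real.arctan (a * w) := by
    have h1 : a * w < Real.sqrt (a ^ 2 + 1) * w := by
      exact mul_lt_mul_of_pos_right has hw0
    have := mul_arctan_lt (mul_pos ha hw0) h1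
    nlinarith [this, hw0]
  have harg1 : Real.sin θ * Real.sqrt (a ^ 2 + 1) / (b + a * Real.cos θ)
      = Real.sqrt (a ^ 2 + 1) * w := by rw [hw]; ring
  have harg2 : a * Real.sin θ / (b + a * Real.cos θ) = a * w := by rw [hw]; ring
  rw [T, harg1, harg2, div_mul_eq_mul_div, div_lt_iff₀ hs]
  nlinarith [key]

lemma arctan_arctan_sum {a b θ : ℝ} (ha : 0 < a) (hb : 0 < b) (hθ1 : 0 < θ)
    (hθ2 : θ ≤ Real.pi / 2) :
    Real.arctan (a * Real.sin θ / (b + a * Real.cos θ)) +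
      Real.arctan (b * Real.sin θ / (a + b * Real.cos θ)) = θ := by
  rcases eq_or_lt_of_le hθ2 with h | h
  · subst h
    rw [Real.cos_pi_div_two, Real.sin_pi_div_two]
    have h1 : a * 1 / (b + a * 0) = a / b := by ring
    have h2 : b * 1 / (a + b * 0) = (a / b)⁻¹ := by
      rw [inv_div]; ring
    rw [h1, h2, Real.arctan_inv_of_pos (by positivity)]
    ring
  · have hcos : 0 < Real.cos θ := Real.cos_pos_of_mem_Ioo ⟨by linarith [Real.pi_pos], h⟩
    have hsin : 0 < Real.sin θ := Real.sin_pos_of_pos_of_lt_pi hθ1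
      (h.trans_le (by linarith [Real.pi_pos]))
    have hda : 0 < b + a * Real.cos θ := by positivity
    have hdb : 0 < a + b * Real.cos θ := by positivity
    have hpyth : Real.sin θ ^ 2 = 1 - Real.cos θ ^ 2 := by
      nlinarith [Real.sin_sq_add_cos_sq θ]
    have hXY : (a * Real.sin θ / (b + a * Real.cos θ)) *
        (b * Real.sin θ / (a + b * Real.cos θ)) < 1 := by
      rw [div_mul_div_comm, div_lt_one (by positivity)]
      have hab : a * Real.sin θ * (b * Real.sin θ) = a * b - a * b * Real.cos θ ^ 2 := by
        linear_combination (a * b) * hpyth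
      have h1 : 0 < Real.cos θ * (a ^ 2 + b ^ 2) := by positivity
      have h2 : 0 < a * b * (Real.cos θ * Real.cos θ) := by positivity
      nlinarith [hab, h1, h2]
    rw [Real.arctan_add hXY]
    have hform : (a * Real.sin θ / (b + a * Real.cos θ) +
        b * Real.sin θ / (a + b * Real.cos θ)) /
        (1 - a * Real.sin θ / (b + a * Real.cos θ) *
          (b * Real.sin θ / (a + b * Real.cos θ))) = Real.tan θ := by
      have hne : 1 - a * Real.sin θ / (b + a * Real.cos θ) *
          (b * Real.sin θ / (a + b * Real.cos θ)) ≠ 0 := by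
        have h0 : a * Real.sin θ / (b + a * Real.cos θ) *
            (b * Real.sin θ / (a + b * Real.cos θ)) < 1 := hXY
        intro hc; rw [sub_eq_zero] at hc; rw [← hc] at h0; exact lt_irrefl _ h0
      rw [Real.tan_eq_sin_div_cos, div_eq_div_iff hne hcos.ne']
      field_simp
      ring_nf
      linear_combination (a * b) * hpyth
    rw [hform, Real.arctan_tan (by linarith [Real.pi_pos]) h]

lemma T_add_lt {a b θ : ℝ} (ha : 0 < a) (hb : 0 < b) (hθ1 : 0 < θ) (hθ2 : θ ≤ Real.pi / 2) :
    T a b θ + T b a θ < 2 * θ := by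
  have h1 := T_lt_aux ha hb hθ1 hθ2
  have h2 := T_lt_aux hb ha hθ1 hθ2
  have h3 := arctan_arctan_sum ha hb hθ1 hθ2
  linarith

lemma T_lt {a b θ : ℝ} (ha : 0 < a) (hb : 0 < b) (hθ1 : 0 < θ) (hθ2 : θ ≤ Real.pi / 2) :
    T a b θ < 2 * θ := by
  have := T_add_lt ha hb hθ1 hθ2
  have := T_pos hb ha hθ1 hθ2
  linarith



theorem stmt_12 {F E : Type*} [Fintype F] [Fintype E] [Nonempty F] [DecidableEq F]
    (ε : E → F × F) (θ : E → ℝ) (hθ : ∀ e, 0 < θ e ∧ θ e ≤ Real.pi / 2)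
    (hadj : ∀ f : F, ∃ e : E, (ε e).1 = f ∨ (ε e).2 = f)
    (k : F → ℝ) (hk : ∀ f, 0 < k f) :
    (∀ f, 0 < Ttot ε θ k f) ∧
    (∀ F' : Finset F, F'.Nonempty →
      ∑ f ∈ F', Ttot ε θ k f <
        ∑ e ∈ Finset.univ.filter (fun e => (ε e).1 ∈ F' ∨ (ε e).2 ∈ F'),
          2 * θ e) := by
  constructor
  · intro f
    unfold Ttot
    obtain ⟨e0, he0⟩ := hadj f
    apply Finset.sum_pos'
    · intro e _
      have h1 : (0:ℝ) ≤ if (ε e).1 = f then T (k f) (k (ε e).2) (θ e) else 0 := by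
        split
        · exact (T_pos (hk f) (hk _) (hθ e).1 (hθ e).2).le
        · exact le_refl 0
      have h2 : (0:ℝ) ≤ if (ε e).2 = f then T (k f) (k (ε e).1) (θ e) else 0 := by
        split
        · exact (T_pos (hk f) (hk _) (hθ e).1 (hθ e).2).le
        · exact le_refl 0
      linarith
    · refine ⟨e0, Finset.mem_univ _, ?_⟩
      rcases he0 with h | h
      · have h2 : (0:ℝ) ≤ if (ε e0).2 = f then T (k f) (k (ε e0).1) (θ e0) else 0 := by
          split
          · exact (T_pos (hk f) (hk _) (hθ e0).1 (hθ e0).2).le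
          · exact le_refl 0
        rw [if_pos h]
        have := T_pos (hk f) (hk (ε e0).2) (hθ e0).1 (hθ e0).2
        linarith
      · have h2 : (0:ℝ) ≤ if (ε e0).1 = f then T (k f) (k (ε e0).2) (θ e0) else 0 := by
          split
          · exact (T_pos (hk f) (hk _) (hθ e0).1 (hθ e0).2).le
          · exact le_refl 0
        rw [if_pos h]
        have := T_pos (hk f) (hk (ε e0).1) (hθ e0).1 (hθ e0).2
        linarith
  · intro F' hF'
    have expand : ∑ f ∈ F', Ttot ε θ k f =
        ∑ e : E, ((if (ε e).1 ∈ F' then T (k (ε e).1) (k (ε e).2) (θ e) else 0) +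
          (if (ε e).2 ∈ F' then T (k (ε e).2) (k (ε e).1) (θ e) else 0)) := by
      unfold Ttot
      rw [Finset.sum_comm]
      refine Finset.sum_congr rfl fun e _ => ?_
      rw [Finset.sum_add_distrib, Finset.sum_ite_eq F' (ε e).1
          (fun f => T (k f) (k (ε e).2) (θ e)),
        Finset.sum_ite_eq F' (ε e).2 (fun f => T (k f) (k (ε e).1) (θ e))]
    rw [expand]
    have hfilter : ∑ e ∈ Finset.univ.filter (fun e => (ε e).1 ∈ F' ∨ (ε e).2 ∈ F'),
        ((if (ε e).1 ∈ F' then T (k (ε e).1) (k (ε e).2) (θ e) else 0) +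
          (if (ε e).2 ∈ F' then T (k (ε e).2) (k (ε e).1) (θ e) else 0)) =
        ∑ e : E, ((if (ε e).1 ∈ F' then T (k (ε e).1) (k (ε e).2) (θ e) else 0) +
          (if (ε e).2 ∈ F' then T (k (ε e).2) (k (ε e).1) (θ e) else 0)) := by
      apply Finset.sum_filter_of_ne
      intro e _ hne
      by_contra hc
      push_neg at hc
      rw [if_neg hc.1, if_neg hc.2] at hne
      simp at hne
    rw [← hfilter]
    apply Finset.sum_lt_sum_of_nonempty
    · obtain ⟨f, hf⟩ := hF'
      obtain ⟨e, he⟩ := hadj f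
      refine ⟨e, Finset.mem_filter.mpr ⟨Finset.mem_univ _, ?_⟩⟩
      rcases he with h | h
      · exact Or.inl (h ▸ hf)
      · exact Or.inr (h ▸ hf)
    · intro e he
      have hmem := (Finset.mem_filter.mp he).2
      have hθ1 := (hθ e).1
      have hθ2 := (hθ e).2
      by_cases h1 : (ε e).1 ∈ F' <;> by_cases h2 : (ε e).2 ∈ F'
      · rw [if_pos h1, if_pos h2]
        exact T_add_lt (hk _) (hk _) hθ1 hθ2
      · rw [if_pos h1, if_neg h2]
        have := T_lt (hk (ε e).1) (hk (ε e).2) hθ1 hθ2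
        linarith
      · rw [if_neg h1, if_pos h2]
        have := T_lt (hk (ε e).2) (hk (ε e).1) hθ1 hθ2
        linarith
      · exact absurd hmem (by simp [h1, h2])
end
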